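/- Fix j ∈ {1,…,ℓ}. Let D = (g; f_1,…,f_ℓ) be a multiple Riordan array with f_j = t·g and E = (G; F_1,…,F_ℓ) a multiple Riordan array with F_j = t·G, let h be an ℓ-th root of f_1⋯f_ℓ, and let q_i ∈ K[[t]] satisfy f_i = q_i·h for i = 1,…,ℓ. Then the matrix product of D and E equals the multiple Riordan array ( g·G(h); q_1·F_1(h), …, q_ℓ·F_ℓ(h) ), and its j-th multiplier satisfies q_j·F_j(h) = t·( g·G(h) ). Hence the product of two j-th Bell arrays is again a j-th Bell array (the j-th Bell arrays form a subgroup of the multiple Riordan group). -/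

import Mathlib

open PowerSeries Finset

/-- Formal substitution `F(u)`: for `u` with zero constant term, the `n`-th coefficient of
`F(u)` is `∑_{k ≤ n} F_k · [t^n] u^k`. -/
noncomputable def psComp {K : Type*} [CommRing K] (F u : K⟦X⟧) : K⟦X⟧ :=
  PowerSeries.mk fun n => ∑ k ∈ Finset.range (n + 1), coeff (R := K) k F * coeff (R := K) n (u ^ k)

/-- Entry `d_{n,k}` of the multiple Riordan array `(g; f_0, …, f_{ℓ-1})`: the `k`-th column,
`k = qℓ + m`, has generating function `g · f_0⋯f_{m-1} · (f_0⋯f_{ℓ-1})^q`. -/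
noncomputable def mrEntry {K : Type*} [CommRing K] (ℓ : ℕ) (g : K⟦X⟧) (f : ℕ → K⟦X⟧)
    (n k : ℕ) : K :=
  coeff (R := K) n (g * (∏ i ∈ Finset.range (k % ℓ), f i) * (∏ i ∈ Finset.range ℓ, f i) ^ (k / ℓ))

/-!
Write `k = qℓ + m`. Column `k` of `(G; F)` is supported on the exponents `j ≡ k (mod ℓ)`, and on
those rows column `j` of `(g; f)` is `g q_0⋯q_{m-1} h^j`, because `f_i = q_i h` and
`q_0⋯q_{ℓ-1} = 1`. Hence column `k` of the product is `g q_0⋯q_{m-1} · C(h)`, where `C` is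
column `k` of `(G; F)`; since substitution of `h` is a ring homomorphism, `C(h)` is the column of
`(G(h); F_0(h), …)`, and the factors regroup into the claimed array. For the Bell condition,
`q_j F_j(h) = q_j h G(h) = f_j G(h) = t g G(h)`.
-/

lemma prod_eq_one_of_pow_eq_prod {R : Type*} [CommRing R] [IsDomain R] {ℓ : ℕ} {f q : ℕ → R}
    {h : R} (hh : h ≠ 0) (hfq : ∀ i < ℓ, f i = q i * h) (hhf : h ^ ℓ = ∏ i ∈ range ℓ, f i) :
    ∏ i ∈ range ℓ, q i = 1 := by
  rw [prod_congr rfl fun i hi => hfq i (mem_range.mp hi), prod_mul_distrib, prod_const,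
    card_range] at hhf
  exact (mul_eq_right₀ (pow_ne_zero ℓ hh)).mp hhf.symm

namespace PowerSeries

variable {R : Type*} [CommRing R]

lemma coeff_pow_eq_zero_of_lt {u : R⟦X⟧} (hu : constantCoeff u = 0) {n k : ℕ} (hnk : n < k) :
    coeff n (u ^ k) = 0 :=
  X_pow_dvd_iff.mp (pow_dvd_pow_of_dvd (X_dvd_iff.mpr hu) k) n hnk

theorem psComp_eq_subst {u : R⟦X⟧} (hu : constantCoeff u = 0) (F : R⟦X⟧) :
    psComp F u = F.subst u := by
  ext n
  rw [psComp, coeff_mk, coeff_subst' (HasSubst.of_constantCoeff_zero' hu),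
    finsum_eq_sum_of_support_subset (s := range (n + 1))]
  · simp only [smul_eq_mul]
  · intro k hk
    by_contra hkn
    exact hk (show coeff k F • coeff n (u ^ k) = 0 by
      rw [coeff_pow_eq_zero_of_lt hu (by simpa using hkn), smul_zero])

theorem psComp_X_mul {u : R⟦X⟧} (hu : constantCoeff u = 0) (F : R⟦X⟧) :
    psComp (X * F) u = u * psComp F u := by
  have hsubst := HasSubst.of_constantCoeff_zero' hu
  rw [psComp_eq_subst hu, psComp_eq_subst hu, subst_mul hsubst, subst_X hsubst]

/-- The fundamental theorem of Riordan arrays, coefficientwise. -/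
theorem coeff_mul_psComp {u : R⟦X⟧} (hu : constantCoeff u = 0) (A C : R⟦X⟧) (n : ℕ) :
    coeff n (A * psComp C u) = ∑ j ∈ range (n + 1), coeff n (A * u ^ j) * coeff j C := by
  set S := ∑ j ∈ range (n + 1), PowerSeries.C (coeff j C) * u ^ j
  have htail : X ^ (n + 1) ∣ psComp C u - S := by
    refine X_pow_dvd_iff.mpr fun r hr => ?_
    rw [map_sub, map_sum, psComp, coeff_mk, sub_eq_zero]
    simp only [coeff_C_mul]
    refine sum_subset (range_subset_range.mpr (by omega)) fun k _ hk => ?_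
    rw [coeff_pow_eq_zero_of_lt hu (by simp at hk; omega), mul_zero]
  have hlow : coeff n (A * (psComp C u - S)) = 0 :=
    X_pow_dvd_iff.mp (dvd_mul_of_dvd_right htail A) n (by omega)
  rw [mul_sub, map_sub, sub_eq_zero] at hlow
  rw [hlow, mul_sum, map_sum]
  refine sum_congr rfl fun j _ => ?_
  rw [mul_left_comm, coeff_C_mul, mul_comm]

def IsSupportedMod (ℓ : ℕ) (r : ZMod ℓ) (A : R⟦X⟧) : Prop :=
  ∀ n, coeff n A ≠ 0 → (n : ZMod ℓ) = r

namespace IsSupportedMod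

variable {ℓ : ℕ}

lemma one : IsSupportedMod ℓ 0 (1 : R⟦X⟧) := by
  intro n hn
  obtain rfl : n = 0 := by
    by_contra h0
    exact hn (by rw [coeff_one, if_neg h0])
  exact Nat.cast_zero

lemma mul {r s : ZMod ℓ} {A B : R⟦X⟧} (hA : IsSupportedMod ℓ r A) (hB : IsSupportedMod ℓ s B) :
    IsSupportedMod ℓ (r + s) (A * B) := by
  intro n hn
  rw [coeff_mul] at hn
  obtain ⟨p, hp, hne⟩ := exists_ne_zero_of_sum_ne_zero hn
  rw [HasAntidiagonal.mem_antidiagonal] at hp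
  rw [← hp, Nat.cast_add, hA _ (left_ne_zero_of_mul hne), hB _ (right_ne_zero_of_mul hne)]

lemma pow {r : ZMod ℓ} {A : R⟦X⟧} (hA : IsSupportedMod ℓ r A) (k : ℕ) :
    IsSupportedMod ℓ (k * r) (A ^ k) := by
  induction k with
  | zero => simpa using one
  | succ k ih => simpa [pow_succ, add_mul] using ih.mul hA

lemma prod {ι : Type*} {s : Finset ι} {r : ι → ZMod ℓ} {F : ι → R⟦X⟧}
    (hF : ∀ i ∈ s, IsSupportedMod ℓ (r i) (F i)) :
    IsSupportedMod ℓ (∑ i ∈ s, r i) (∏ i ∈ s, F i) := by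
  induction s using Finset.cons_induction with
  | empty => simpa using one
  | cons a s ha ih =>
    rw [prod_cons, sum_cons]
    exact (hF a (mem_cons_self a s)).mul (ih fun i hi => hF i (mem_cons_of_mem hi))

end IsSupportedMod

end PowerSeries

section MultipleRiordan

variable {R : Type*} [CommRing R] {ℓ : ℕ}

noncomputable def mrColumn (ℓ : ℕ) (g : R⟦X⟧) (f : ℕ → R⟦X⟧) (k : ℕ) : R⟦X⟧ :=
  g * (∏ i ∈ range (k % ℓ), f i) * (∏ i ∈ range ℓ, f i) ^ (k / ℓ)

lemma mrEntry_eq_coeff_mrColumn (g : R⟦X⟧) (f : ℕ → R⟦X⟧) (n k : ℕ) :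
    mrEntry ℓ g f n k = coeff n (mrColumn ℓ g f k) := rfl

lemma mrColumn_mul (g G : R⟦X⟧) (f F : ℕ → R⟦X⟧) (k : ℕ) :
    mrColumn ℓ (g * G) (fun i => f i * F i) k = mrColumn ℓ g f k * mrColumn ℓ G F k := by
  simp only [mrColumn, prod_mul_distrib, mul_pow]
  ring

lemma mrColumn_one_const (u : R⟦X⟧) (k : ℕ) : mrColumn ℓ 1 (fun _ => u) k = u ^ k := by
  rw [mrColumn, prod_const, prod_const, card_range, card_range, one_mul, ← pow_mul, ← pow_add,
    Nat.mod_add_div]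

lemma mrColumn_eq_of_mod_eq {g : R⟦X⟧} {q : ℕ → R⟦X⟧} (hq : ∏ i ∈ range ℓ, q i = 1) {j k : ℕ}
    (hjk : j % ℓ = k % ℓ) : mrColumn ℓ g q j = mrColumn ℓ g q k := by
  simp only [mrColumn, hq, one_pow, hjk]

lemma mrColumn_eq_mul_pow (hℓ : 0 < ℓ) (g : R⟦X⟧) {f q : ℕ → R⟦X⟧} {h : R⟦X⟧}
    (hfq : ∀ i < ℓ, f i = q i * h) (k : ℕ) : mrColumn ℓ g f k = mrColumn ℓ g q k * h ^ k := by
  have hk : k % ℓ < ℓ := Nat.mod_lt k hℓ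
  calc mrColumn ℓ g f k = mrColumn ℓ (g * 1) (fun i => q i * h) k := by
        simp only [mrColumn, mul_one]
        rw [prod_congr rfl fun i hi => hfq i ((mem_range.mp hi).trans hk),
          prod_congr rfl fun i hi => hfq i (mem_range.mp hi)]
    _ = mrColumn ℓ g q k * h ^ k := by rw [mrColumn_mul, mrColumn_one_const]

lemma psComp_mrColumn {h : R⟦X⟧} (hh : constantCoeff h = 0) (G : R⟦X⟧) (F : ℕ → R⟦X⟧) (k : ℕ) :
    psComp (mrColumn ℓ G F k) h = mrColumn ℓ (psComp G h) (fun i => psComp (F i) h) k := by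
  simp only [psComp_eq_subst hh, ← coe_substAlgHom (HasSubst.of_constantCoeff_zero' hh), mrColumn,
    map_mul, map_prod, map_pow]

lemma isSupportedMod_mrColumn (hℓ : 0 < ℓ) {G : R⟦X⟧} {F : ℕ → R⟦X⟧}
    (hG : IsSupportedMod ℓ 0 G) (hF : ∀ i < ℓ, IsSupportedMod ℓ 1 (F i)) (k : ℕ) :
    IsSupportedMod ℓ k (mrColumn ℓ G F k) := by
  have hprod : ∀ m ≤ ℓ, IsSupportedMod ℓ m (∏ i ∈ range m, F i) := fun m hm => by
    simpa using IsSupportedMod.prod fun i hi => hF i ((mem_range.mp hi).trans_le hm)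
  rw [mrColumn]
  convert (hG.mul (hprod _ (Nat.mod_lt k hℓ).le)).mul ((hprod ℓ le_rfl).pow (k / ℓ)) using 1
  rw [ZMod.natCast_self, mul_zero, add_zero, zero_add, ZMod.natCast_mod]

theorem sum_mrEntry_mul_mrEntry (hℓ : 0 < ℓ) {g G h : R⟦X⟧} {f F q : ℕ → R⟦X⟧}
    (hG : IsSupportedMod ℓ 0 G) (hF : ∀ i < ℓ, IsSupportedMod ℓ 1 (F i))
    (hh : constantCoeff h = 0) (hfq : ∀ i < ℓ, f i = q i * h) (hq : ∏ i ∈ range ℓ, q i = 1)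
    (n k : ℕ) :
    ∑ j ∈ range (n + 1), mrEntry ℓ g f n j * mrEntry ℓ G F j k =
      mrEntry ℓ (g * psComp G h) (fun i => q i * psComp (F i) h) n k := by
  simp only [mrEntry_eq_coeff_mrColumn]
  calc ∑ j ∈ range (n + 1), coeff n (mrColumn ℓ g f j) * coeff j (mrColumn ℓ G F k)
      = ∑ j ∈ range (n + 1), coeff n (mrColumn ℓ g q k * h ^ j) * coeff j (mrColumn ℓ G F k) := by
        refine sum_congr rfl fun j _ => ?_
        by_cases hj : coeff j (mrColumn ℓ G F k) = 0
        · rw [hj, mul_zero, mul_zero]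
        · have hjk : j % ℓ = k % ℓ := (ZMod.natCast_eq_natCast_iff' j k ℓ).mp
            (isSupportedMod_mrColumn hℓ hG hF k j hj)
          rw [mrColumn_eq_mul_pow hℓ g hfq, mrColumn_eq_of_mod_eq hq hjk]
    _ = coeff n (mrColumn ℓ g q k * psComp (mrColumn ℓ G F k) h) := (coeff_mul_psComp hh _ _ n).symm
    _ = coeff n (mrColumn ℓ (g * psComp G h) (fun i => q i * psComp (F i) h) k) := by
        rw [psComp_mrColumn hh, mrColumn_mul]

end MultipleRiordan

theorem stmt5_general {K : Type*} [Field K] (ℓ : ℕ) (hℓ : 2 ≤ ℓ)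
    (j : ℕ) (hj : j < ℓ)
    (g G : K⟦X⟧) (f F : ℕ → K⟦X⟧)
    (hG : ∀ n, ¬ (ℓ ∣ n) → coeff (R := K) n G = 0)
    (hF : ∀ i < ℓ, ∀ n, n % ℓ ≠ 1 → coeff (R := K) n (F i) = 0)
    (hBell : f j = X * g) (hBell' : F j = X * G)
    (h : K⟦X⟧) (hhs : ∀ n, n % ℓ ≠ 1 → coeff (R := K) n h = 0) (hh1 : coeff (R := K) 1 h ≠ 0)
    (hhl : h ^ ℓ = ∏ i ∈ Finset.range ℓ, f i)
    (q : ℕ → K⟦X⟧) (hq : ∀ i < ℓ, f i = q i * h)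
    (d e : ℕ → ℕ → K)
    (hd : ∀ n k, d n k = mrEntry ℓ g f n k)
    (he : ∀ n k, e n k = mrEntry ℓ G F n k) :
    (∀ n k, ∑ j' ∈ Finset.range (n + 1), d n j' * e j' k
      = mrEntry ℓ (g * psComp G h) (fun i => q i * psComp (F i) h) n k) ∧
    q j * psComp (F j) h = X * (g * psComp G h) := by
  have hh0 : constantCoeff h = 0 := by simpa using hhs 0 (by rw [Nat.zero_mod]; omega)
  have hq1 : ∏ i ∈ range ℓ, q i = 1 :=
    prod_eq_one_of_pow_eq_prod (fun h0 => hh1 (by rw [h0, map_zero])) hq hhl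
  have hGsupp : IsSupportedMod ℓ 0 G := fun n hn =>
    (ZMod.natCast_eq_zero_iff n ℓ).mpr (not_not.mp (mt (hG n) hn))
  have hFsupp : ∀ i < ℓ, IsSupportedMod ℓ 1 (F i) := fun i hi n hn => by
    rw [← ZMod.natCast_mod, not_not.mp (mt (hF i hi n) hn), Nat.cast_one]
  refine ⟨fun n k => ?_, ?_⟩
  · simp only [hd, he]
    exact sum_mrEntry_mul_mrEntry (by omega) hGsupp hFsupp hh0 hq hq1 n k
  · rw [hBell', psComp_X_mul hh0, ← mul_assoc, ← hq j hj, hBell, mul_assoc]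

/-- The product of two `j`-th Bell arrays is a `j`-th Bell array: the `j`-th Bell arrays form
a subgroup of the multiple Riordan group.  (Here the multipliers are indexed `0, …, ℓ-1`,
so index `j` corresponds to the `(j+1)`-st multiplier.) -/
theorem stmt5 {K : Type*} [Field K] [CharZero K] (ℓ : ℕ) (hℓ : 2 ≤ ℓ)
    (j : ℕ) (hj : j < ℓ)
    (g G : K⟦X⟧) (f F : ℕ → K⟦X⟧)
    (hg : ∀ n, ¬ (ℓ ∣ n) → coeff (R := K) n g = 0) (hg0 : constantCoeff (R := K) g ≠ 0)
    (hf : ∀ i < ℓ, ∀ n, n % ℓ ≠ 1 → coeff (R := K) n (f i) = 0)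
    (hf1 : ∀ i < ℓ, coeff (R := K) 1 (f i) ≠ 0)
    (hG : ∀ n, ¬ (ℓ ∣ n) → coeff (R := K) n G = 0) (hG0 : constantCoeff (R := K) G ≠ 0)
    (hF : ∀ i < ℓ, ∀ n, n % ℓ ≠ 1 → coeff (R := K) n (F i) = 0)
    (hF1 : ∀ i < ℓ, coeff (R := K) 1 (F i) ≠ 0)
    (hBell : f j = X * g) (hBell' : F j = X * G)
    (h : K⟦X⟧) (hhs : ∀ n, n % ℓ ≠ 1 → coeff (R := K) n h = 0) (hh1 : coeff (R := K) 1 h ≠ 0)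
    (hhl : h ^ ℓ = ∏ i ∈ Finset.range ℓ, f i)
    (q : ℕ → K⟦X⟧) (hq : ∀ i < ℓ, f i = q i * h)
    (d e : ℕ → ℕ → K)
    (hd : ∀ n k, d n k = mrEntry ℓ g f n k)
    (he : ∀ n k, e n k = mrEntry ℓ G F n k) :
    (∀ n k, ∑ j' ∈ Finset.range (n + 1), d n j' * e j' k
      = mrEntry ℓ (g * psComp G h) (fun i => q i * psComp (F i) h) n k) ∧
    q j * psComp (F j) h = X * (g * psComp G h) :=
  stmt5_general ℓ hℓ j hj g G f F hG hF hBell hBell' h hhs hh1 hhl q hq d e hd he
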